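/- arXiv:2102.01510 — 5 statements merged into one kernel-verified Lean document; each statement's English description precedes it below -/
import Mathlib

section
/- Let τ = min{ i > 0 : θ^i(G_j) = G_j for all j = 0, 1, …, μ }, where θ^i is applied entrywise to the matrices G_j. Then τ is well defined (the minimum exists), τ ≤ m, and the coefficient matrices of the skew convolutional encoder are τ-periodic in time: θ^{t+τ}(G_j) = θ^t(G_j) for all t ∈ ℕ and all j = 0, 1, …, μ. Consequently the skew convolutional encoder is a periodically time-varying convolutional encoder with period τ ≤ m. -/
/-!
Since `θ^i a = a^(q^i)` and `a^(q^m) = a` in a field with `q^m` elements, `θ^m = 1`. Hence `m`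
lies in the set of periods, which therefore has a least element `τ ≤ m`, and
`θ^(t+τ) = θ^t ∘ θ^τ` turns `θ^τ(G_j) = G_j` into `θ^(t+τ)(G_j) = θ^t(G_j)`.
-/

theorem RingAut.pow_apply_eq_pow_pow {R : Type*} [Semiring R] {θ : R ≃+* R} {q : ℕ}
    (hθ : ∀ a, θ a = a ^ q) (i : ℕ) (a : R) : (θ ^ i) a = a ^ q ^ i := by
  induction i generalizing a with
  | zero => simp
  | succ i ih => rw [pow_succ, RingAut.mul_apply, ih, hθ, ← pow_mul, ← pow_succ']

theorem FiniteField.ringAut_pow_eq_one_of_card_eq {F : Type*} [Field F] [Fintype F] {q m : ℕ}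
    (hcard : Fintype.card F = q ^ m) {θ : F ≃+* F} (hθ : ∀ a, θ a = a ^ q) : θ ^ m = 1 := by
  ext a
  rw [RingAut.pow_apply_eq_pow_pow hθ, ← hcard, FiniteField.pow_card, RingAut.one_apply]

theorem Matrix.map_ringAut_pow_add_of_map_pow_eq_self {ι κ R : Type*} [Semiring R]
    {θ : R ≃+* R} {τ : ℕ} {M : Matrix ι κ R} (hM : M.map ⇑(θ ^ τ) = M) (t : ℕ) :
    M.map ⇑(θ ^ (t + τ)) = M.map ⇑(θ ^ t) := by
  conv_rhs => rw [← hM]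
  rw [Matrix.map_map, pow_add]
  rfl

theorem skew_encoder_periodic_general
    (q m k n μ : ℕ) (hm : 1 ≤ m)
    (F : Type) [Field F] [Fintype F] (hcard : Fintype.card F = q ^ m)
    (θ : F ≃+* F) (hθ : ∀ a : F, θ a = a ^ q)
    (G : Fin (μ + 1) → Matrix (Fin k) (Fin n) F) :
    ∃ τ : ℕ,
      IsLeast {i : ℕ | 0 < i ∧ ∀ j : Fin (μ + 1), (G j).map ⇑(θ ^ i) = G j} τ ∧
      τ ≤ m ∧
      ∀ (t : ℕ) (j : Fin (μ + 1)), (G j).map ⇑(θ ^ (t + τ)) = (G j).map ⇑(θ ^ t) := by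
  set S := {i : ℕ | 0 < i ∧ ∀ j : Fin (μ + 1), (G j).map ⇑(θ ^ i) = G j}
  have hθm : θ ^ m = 1 := FiniteField.ringAut_pow_eq_one_of_card_eq hcard hθ
  have hmS : m ∈ S := ⟨hm, fun j => by rw [hθm, RingAut.coe_one, Matrix.map_id]⟩
  have hleast : IsLeast S (sInf S) := isLeast_csInf ⟨m, hmS⟩
  exact ⟨sInf S, hleast, hleast.2 hmS,
    fun t j => Matrix.map_ringAut_pow_add_of_map_pow_eq_self (hleast.1.2 j) t⟩

/-- For a skew convolutional encoder over `F = GF(q^m)` with Frobenius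
`θ(a) = a^q` and coefficient matrices `G_0, …, G_μ`, the quantity
`τ = min{ i > 0 : θ^i(G_j) = G_j ∀ j }` is well defined (the minimum exists),
`τ ≤ m`, and the encoder coefficients are `τ`-periodic in time:
`θ^{t+τ}(G_j) = θ^t(G_j)` for all `t` and `j`. -/
theorem skew_encoder_periodic
    (q p e m k n μ : ℕ) (hp : p.Prime) (he : 0 < e) (hq : q = p ^ e) (hm : 1 ≤ m)
    (F : Type) [Field F] [Fintype F] (hcard : Fintype.card F = q ^ m)
    (θ : F ≃+* F) (hθ : ∀ a : F, θ a = a ^ q)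
    (G : Fin (μ + 1) → Matrix (Fin k) (Fin n) F) :
    ∃ τ : ℕ,
      IsLeast {i : ℕ | 0 < i ∧ ∀ j : Fin (μ + 1), (G j).map ⇑(θ ^ i) = G j} τ ∧
      τ ≤ m ∧
      ∀ (t : ℕ) (j : Fin (μ + 1)), (G j).map ⇑(θ ^ (t + τ)) = (G j).map ⇑(θ ^ t) :=
  skew_encoder_periodic_general q m k n μ hm F hcard θ hθ G
end

section
/- The free distance of the example skew convolutional code C equals 4: for every information sequence u over F_4 with finite support and u ≠ 0, the weight of the code sequence v (the total number of nonzero F_4-entries over all blocks v_t) is at least 4, and there exists a finitely supported nonzero u whose code sequence has weight exactly 4. -/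
/-!
Every nonzero entry of the two generator matrices `G_0, G_1` is a nonzero power of `α`. Hence
the block where a finitely supported input sequence starts (fresh input, no memory) and the
block right after it ends (no input, only memory) both have weight 2, so every nonzero code
sequence has weight at least 4; the single impulse `u = δ_0` touches only the blocks `0` and
`1` and attains it.
-/

/-- The encoder of the example skew convolutional [2,1] code over `F_4` (with
`α² = α + 1`): `v_t = u_t(1, α²) + u_{t−1}(α, α²)` for odd `t` and
`v_t = u_t(1, α) + u_{t−1}(α², α)` for even `t`, with `u_t = 0` for `t < 0`. -/
noncomputable def skewEncEx {F : Type} [Field F] (α : F) (u : ℤ → F) (t : ℤ) :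
    Fin 2 → F :=
  if Odd t then u t • ![1, α ^ 2] + u (t - 1) • ![α, α ^ 2]
  else u t • ![1, α] + u (t - 1) • ![α ^ 2, α]

lemma Int.exists_support_bounds {M : Type*} [Zero M] {u : ℤ → M}
    (hfin : {t | u t ≠ 0}.Finite) (hne : u ≠ 0) :
    ∃ s e, s ≤ e ∧ u s ≠ 0 ∧ u (s - 1) = 0 ∧ u e ≠ 0 ∧ u (e + 1) = 0 := by
  obtain ⟨t, ht⟩ := Function.ne_iff.mp hne
  have hS : hfin.toFinset.Nonempty := ⟨t, by simpa using ht⟩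
  have mem_iff : ∀ r, r ∈ hfin.toFinset ↔ u r ≠ 0 := by simp
  refine ⟨_, _, Finset.min'_le _ _ (Finset.max'_mem _ hS),
    (mem_iff _).1 (Finset.min'_mem _ hS), ?_, (mem_iff _).1 (Finset.max'_mem _ hS), ?_⟩
  · by_contra h
    have := Finset.min'_le _ _ ((mem_iff _).2 h)
    omega
  · by_contra h
    have := Finset.le_max' _ _ ((mem_iff _).2 h)
    omega

namespace SkewEncEx

variable {F : Type} [Field F] {α : F} {u : ℤ → F} {t : ℤ}

lemma eq_zero (h : u t = 0) (h' : u (t - 1) = 0) : skewEncEx α u t = 0 := by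
  unfold skewEncEx
  split_ifs <;> simp [h, h']

lemma apply_ne_zero_of_input (hα : α ≠ 0) (h : u t ≠ 0) (h' : u (t - 1) = 0) (i : Fin 2) :
    skewEncEx α u t i ≠ 0 := by
  unfold skewEncEx
  split_ifs <;> fin_cases i <;> simp [h, h', hα]

lemma apply_ne_zero_of_memory (hα : α ≠ 0) (h : u t = 0) (h' : u (t - 1) ≠ 0) (i : Fin 2) :
    skewEncEx α u t i ≠ 0 := by
  unfold skewEncEx
  split_ifs <;> fin_cases i <;> simp [h, h', hα]

lemma support_subset :
    {p : ℤ × Fin 2 | skewEncEx α u p.1 p.2 ≠ 0} ⊆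
      ({t | u t ≠ 0} ∪ (· + 1) '' {t | u t ≠ 0}) ×ˢ Set.univ := by
  rintro ⟨t, i⟩ hp
  refine ⟨?_, trivial⟩
  by_contra h
  simp only [Set.mem_union, Set.mem_ofPred_eq, Set.mem_image, not_or, not_exists, not_and,
    not_not] at h
  have h' : u (t - 1) = 0 := by
    by_contra h'
    exact absurd (h.2 _ h') (by omega)
  exact hp (congrFun (eq_zero h.1 h') i)

lemma support_finite (hfin : {t | u t ≠ 0}.Finite) :
    {p : ℤ × Fin 2 | skewEncEx α u p.1 p.2 ≠ 0}.Finite :=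
  ((hfin.union (hfin.image _)).prod Set.finite_univ).subset support_subset

theorem four_le_weight (hα : α ≠ 0) (hfin : {t | u t ≠ 0}.Finite) (hne : u ≠ 0) :
    4 ≤ {p : ℤ × Fin 2 | skewEncEx α u p.1 p.2 ≠ 0}.ncard := by
  obtain ⟨s, e, hse, hs, hs', he, he'⟩ := Int.exists_support_bounds hfin hne
  have hsub : (↑(({s, e + 1} : Finset ℤ) ×ˢ (Finset.univ : Finset (Fin 2))) : Set (ℤ × Fin 2)) ⊆
      {p : ℤ × Fin 2 | skewEncEx α u p.1 p.2 ≠ 0} := by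
    rintro ⟨t, i⟩ hp
    simp only [Finset.coe_product, Finset.coe_insert, Finset.coe_singleton, Set.mem_prod,
      Set.mem_insert_iff, Set.mem_singleton_iff] at hp
    rcases hp.1 with rfl | rfl
    · exact apply_ne_zero_of_input hα hs hs' i
    · exact apply_ne_zero_of_memory hα he' (by simpa using he) i
  calc 4 = (({s, e + 1} : Finset ℤ) ×ˢ Finset.univ : Finset (ℤ × Fin 2)).card := by
        rw [Finset.card_product, Finset.card_pair (by omega), Finset.card_univ, Fintype.card_fin]
    _ ≤ _ := by
        rw [← Set.ncard_coe_finset]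
        exact Set.ncard_le_ncard hsub (support_finite hfin)

lemma weight_single_le_four (t₀ : ℤ) (c : F) :
    {p : ℤ × Fin 2 | skewEncEx α (Pi.single t₀ c) p.1 p.2 ≠ 0}.ncard ≤ 4 := by
  have hsub : {p : ℤ × Fin 2 | skewEncEx α (Pi.single t₀ c) p.1 p.2 ≠ 0} ⊆
      (({t₀, t₀ + 1} : Finset ℤ) ×ˢ Finset.univ : Finset (ℤ × Fin 2)) := by
    rintro ⟨t, i⟩ hp
    by_contra h
    simp only [Finset.coe_product, Finset.coe_insert, Finset.coe_singleton, Set.mem_prod,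
      Set.mem_insert_iff, Set.mem_singleton_iff, Finset.coe_univ, Set.mem_univ, and_true,
      not_or] at h
    obtain ⟨h₀, h₁⟩ := h
    have hu : (Pi.single t₀ c : ℤ → F) t = 0 := by simp [h₀]
    have hu' : (Pi.single t₀ c : ℤ → F) (t - 1) = 0 := by simp [show t - 1 ≠ t₀ by omega]
    exact hp (congrFun (eq_zero hu hu') i)
  calc _ ≤ (({t₀, t₀ + 1} : Finset ℤ) ×ˢ Finset.univ : Finset (ℤ × Fin 2)).card := by
        rw [← Set.ncard_coe_finset]
        exact Set.ncard_le_ncard hsub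
    _ ≤ 2 * 2 := by
        rw [Finset.card_product, Finset.card_univ, Fintype.card_fin]
        exact Nat.mul_le_mul_right 2 Finset.card_le_two

end SkewEncEx

theorem skew_example_free_distance_four_general
    (F : Type) [Field F]
    (α : F) (hα : α ^ 2 = α + 1) :
    (∀ u : ℤ → F, (∀ t : ℤ, t < 0 → u t = 0) → {t : ℤ | u t ≠ 0}.Finite → u ≠ 0 →
      4 ≤ {p : ℤ × Fin 2 | skewEncEx α u p.1 p.2 ≠ 0}.ncard) ∧
    (∃ u : ℤ → F, (∀ t : ℤ, t < 0 → u t = 0) ∧ {t : ℤ | u t ≠ 0}.Finite ∧ u ≠ 0 ∧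
      {p : ℤ × Fin 2 | skewEncEx α u p.1 p.2 ≠ 0}.ncard = 4) := by
  have hα₀ : α ≠ 0 := by
    rintro rfl
    simp at hα
  set δ : ℤ → F := Pi.single 0 1
  have hδ_fin : {t : ℤ | δ t ≠ 0}.Finite := (Set.finite_singleton 0).subset Pi.support_single_subset
  have hδ_ne : δ ≠ 0 := fun h => by simpa [δ] using congrFun h 0
  refine ⟨fun u _ hfin hne => SkewEncEx.four_le_weight hα₀ hfin hne,
    δ, fun t ht => Pi.single_eq_of_ne ht.ne 1, hδ_fin, hδ_ne, ?_⟩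
  exact le_antisymm (SkewEncEx.weight_single_le_four 0 1)
    (SkewEncEx.four_le_weight hα₀ hδ_fin hδ_ne)

/-- The free distance of the example skew convolutional code equals 4:
every finitely supported nonzero causal information sequence `u` over `F_4` is encoded
to a code sequence of weight (total number of nonzero `F_4`-entries over all blocks)
at least 4, and some finitely supported nonzero `u` achieves weight exactly 4. -/
theorem skew_example_free_distance_four
    (F : Type) [Field F] [Fintype F] (hF : Fintype.card F = 4)
    (α : F) (hα : α ^ 2 = α + 1) :
    (∀ u : ℤ → F, (∀ t : ℤ, t < 0 → u t = 0) → {t : ℤ | u t ≠ 0}.Finite → u ≠ 0 →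
      4 ≤ {p : ℤ × Fin 2 | skewEncEx α u p.1 p.2 ≠ 0}.ncard) ∧
    (∃ u : ℤ → F, (∀ t : ℤ, t < 0 → u t = 0) ∧ {t : ℤ | u t ≠ 0}.Finite ∧ u ≠ 0 ∧
      {p : ℤ × Fin 2 | skewEncEx α u p.1 p.2 ≠ 0}.ncard = 4) :=
  skew_example_free_distance_four_general F α hα
end

section
/- For the example skew convolutional code C, the ℓ-th order active burst distance satisfies d_ℓ^b = ℓ + 2 for every ℓ ≥ 2; that is, the minimum of Σ_{s=0}^{ℓ−1} wt(v_{t+s}) over all starting times t ∈ ℕ and all information sequences u describing a loop of length ℓ at time t (i.e., u_{t−1} = 0, u_{t+s} ≠ 0 for 0 ≤ s ≤ ℓ−2, and u_{t+ℓ−1} = 0) equals ℓ + 2, where wt(v_{t+s}) denotes the number of nonzero F_4-entries of the block v_{t+s}. Consequently the slope σ = lim_{ℓ→∞} d_ℓ^b/ℓ equals 1. -/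
open Finset Filter Topology

section HammingWeight

variable {ι M : Type*} [Fintype ι] [DecidableEq M] [Zero M]

theorem ncard_setOf_ne_zero_eq_hammingNorm (v : ι → M) :
    {j | v j ≠ 0}.ncard = hammingNorm v := by
  rw [hammingNorm, ← Set.ncard_coe_finset]
  congr 1
  ext j
  simp

theorem hammingNorm_eq_card_of_forall_ne_zero {v : ι → M} (hv : ∀ j, v j ≠ 0) :
    hammingNorm v = Fintype.card ι := by
  rw [hammingNorm, filter_true_of_mem fun j _ => hv j, card_univ]

theorem hammingNorm_fin_two_eq_one {v : Fin 2 → M} (h0 : v 0 ≠ 0) (h1 : v 1 = 0) :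
    hammingNorm v = 1 := by
  rw [hammingNorm, card_eq_one]
  refine ⟨0, ?_⟩
  ext j
  fin_cases j <;> simp [h0, h1]

end HammingWeight

section GoldenRoot

variable {F : Type*} [Field F] {α : F}

theorem ne_zero_of_sq_eq_add_one (hα : α ^ 2 = α + 1) : α ≠ 0 := by
  rintro rfl
  simp at hα

theorem ne_one_of_sq_eq_add_one (hα : α ^ 2 = α + 1) : α ≠ 1 := by
  rintro rfl
  exact one_ne_zero (by linear_combination -hα : (1 : F) = 0)

theorem sq_ne_one_of_sq_eq_add_one (hα : α ^ 2 = α + 1) : α ^ 2 ≠ 1 := by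
  rw [hα, Ne, add_eq_right]
  exact ne_zero_of_sq_eq_add_one hα

end GoldenRoot

section MemoryOneBlock

variable {F : Type*} [Field F] [DecidableEq F] {a b x y : F}

theorem hammingNorm_block_of_right_eq_zero (hb : b ≠ 0) (hx : x ≠ 0) :
    hammingNorm ![x + 0 * a, (x + 0) * b] = 2 := by
  refine hammingNorm_eq_card_of_forall_ne_zero fun j => ?_
  fin_cases j <;> simp [hx, hb]

theorem hammingNorm_block_of_left_eq_zero (ha : a ≠ 0) (hb : b ≠ 0) (hy : y ≠ 0) :
    hammingNorm ![0 + y * a, (0 + y) * b] = 2 := by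
  refine hammingNorm_eq_card_of_forall_ne_zero fun j => ?_
  fin_cases j <;> simp [hy, ha, hb]

theorem hammingNorm_block_of_eq_neg (ha : a ≠ 1) (hx : x ≠ 0) :
    hammingNorm ![x + -x * a, (x + -x) * b] = 1 := by
  refine hammingNorm_fin_two_eq_one ?_ (by simp)
  rw [Matrix.cons_val_zero, show x + -x * a = x * (1 - a) by ring]
  exact mul_ne_zero hx (sub_ne_zero.2 ha.symm)

theorem one_le_hammingNorm_block (ha : a ≠ 1) (hb : b ≠ 0) (hx : x ≠ 0) :
    1 ≤ hammingNorm ![x + y * a, (x + y) * b] := by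
  by_cases hxy : x + y = 0
  · obtain rfl : y = -x := by linear_combination hxy
    exact (hammingNorm_block_of_eq_neg ha hx).ge
  · refine hammingNorm_pos_iff.2 fun h => mul_ne_zero hxy hb ?_
    simpa using congrFun h 1

end MemoryOneBlock

section Encoder

variable {F : Type} [Field F] {α : F} {u : ℤ → F} {t : ℤ}

theorem skewEncEx_eq_block (hα : α ^ 2 = α + 1) (u : ℤ → F) (t : ℤ) :
    ∃ a b : F, a ≠ 0 ∧ a ≠ 1 ∧ b ≠ 0 ∧
      skewEncEx α u t = ![u t + u (t - 1) * a, (u t + u (t - 1)) * b] := by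
  have h0 := ne_zero_of_sq_eq_add_one hα
  have h1 := ne_one_of_sq_eq_add_one hα
  have h0' := pow_ne_zero 2 h0
  have h1' := sq_ne_one_of_sq_eq_add_one hα
  unfold skewEncEx
  split_ifs
  · refine ⟨α, α ^ 2, h0, h1, h0', ?_⟩
    ext j; fin_cases j <;> simp [add_mul]
  · refine ⟨α ^ 2, α, h0', h1', h0, ?_⟩
    ext j; fin_cases j <;> simp [add_mul]

theorem ncard_skewEncEx_of_start (hα : α ^ 2 = α + 1) (ht : u t ≠ 0) (hprev : u (t - 1) = 0) :
    {j | skewEncEx α u t j ≠ 0}.ncard = 2 := by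
  classical
  obtain ⟨a, b, -, -, hb, henc⟩ := skewEncEx_eq_block hα u t
  rw [ncard_setOf_ne_zero_eq_hammingNorm, henc, hprev]
  exact hammingNorm_block_of_right_eq_zero hb ht

theorem ncard_skewEncEx_of_end (hα : α ^ 2 = α + 1) (ht : u t = 0) (hprev : u (t - 1) ≠ 0) :
    {j | skewEncEx α u t j ≠ 0}.ncard = 2 := by
  classical
  obtain ⟨a, b, ha, -, hb, henc⟩ := skewEncEx_eq_block hα u t
  rw [ncard_setOf_ne_zero_eq_hammingNorm, henc, ht]
  exact hammingNorm_block_of_left_eq_zero ha hb hprev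

theorem one_le_ncard_skewEncEx (hα : α ^ 2 = α + 1) (ht : u t ≠ 0) :
    1 ≤ {j | skewEncEx α u t j ≠ 0}.ncard := by
  classical
  obtain ⟨a, b, -, ha, hb, henc⟩ := skewEncEx_eq_block hα u t
  rw [ncard_setOf_ne_zero_eq_hammingNorm, henc]
  exact one_le_hammingNorm_block ha hb ht

theorem ncard_skewEncEx_of_prev_eq_neg (hα : α ^ 2 = α + 1) (ht : u t ≠ 0)
    (hprev : u (t - 1) = -u t) : {j | skewEncEx α u t j ≠ 0}.ncard = 1 := by
  classical
  obtain ⟨a, b, -, ha, -, henc⟩ := skewEncEx_eq_block hα u t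
  rw [ncard_setOf_ne_zero_eq_hammingNorm, henc, hprev]
  exact hammingNorm_block_of_eq_neg ha ht

end Encoder

/-- The weights `Σ_{s<ℓ} wt(v_{t+s})` of the loops of length `ℓ`; the active burst distance
`d_ℓ^b` is their minimum. -/
def skewLoopWeights {F : Type} [Field F] (α : F) (ℓ : ℕ) : Set ℕ :=
  {w : ℕ | ∃ (t : ℤ) (u : ℤ → F), 0 ≤ t ∧ (∀ s : ℤ, s < 0 → u s = 0) ∧
    u (t - 1) = 0 ∧ (∀ s : ℕ, s ≤ ℓ - 2 → u (t + s) ≠ 0) ∧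
    u (t + (ℓ : ℤ) - 1) = 0 ∧
    w = ∑ s ∈ Finset.range ℓ, {j : Fin 2 | skewEncEx α u (t + s) j ≠ 0}.ncard}

def alternatingBurst (F : Type) [Field F] (m : ℕ) (x : ℤ) : F :=
  if 0 ≤ x ∧ x ≤ m then (-1) ^ x else 0

section Loops

variable {F : Type} [Field F] {α : F}

theorem alternatingBurst_eq_zero {m : ℕ} {x : ℤ} (hx : x < 0 ∨ m < x) :
    alternatingBurst F m x = 0 :=
  if_neg (by omega)

theorem alternatingBurst_ne_zero {m : ℕ} {x : ℤ} (h0 : 0 ≤ x) (hm : x ≤ m) :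
    alternatingBurst F m x ≠ 0 := by
  rw [alternatingBurst, if_pos ⟨h0, hm⟩]
  exact zpow_ne_zero x (neg_ne_zero.2 one_ne_zero)

theorem alternatingBurst_sub_one {m : ℕ} {x : ℤ} (h1 : 1 ≤ x) (hm : x ≤ m) :
    alternatingBurst F m (x - 1) = -alternatingBurst F m x := by
  rw [alternatingBurst, alternatingBurst, if_pos ⟨by omega, by omega⟩, if_pos ⟨by omega, hm⟩,
    zpow_sub_one₀ (neg_ne_zero.2 one_ne_zero), inv_neg_one, mul_neg_one]

theorem le_sum_ncard_skewEncEx_of_loop (hα : α ^ 2 = α + 1) {ℓ : ℕ} (hℓ : 2 ≤ ℓ) {t : ℤ}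
    {u : ℤ → F} (hstart : u (t - 1) = 0) (hmid : ∀ s : ℕ, s ≤ ℓ - 2 → u (t + s) ≠ 0)
    (hend : u (t + ℓ - 1) = 0) :
    ℓ + 2 ≤ ∑ s ∈ range ℓ, {j : Fin 2 | skewEncEx α u (t + s) j ≠ 0}.ncard := by
  obtain ⟨m, rfl⟩ : ∃ m, ℓ = m + 2 := ⟨ℓ - 2, by omega⟩
  have hfirst : {j | skewEncEx α u (t + (0 : ℕ)) j ≠ 0}.ncard = 2 :=
    ncard_skewEncEx_of_start hα (hmid 0 (by omega)) (by simpa using hstart)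
  have hlast : {j | skewEncEx α u (t + (m + 1 : ℕ)) j ≠ 0}.ncard = 2 := by
    refine ncard_skewEncEx_of_end hα ?_ ?_
    · convert hend using 2; push_cast; ring
    · convert hmid m (by omega) using 2; push_cast; ring
  have hmiddle : m ≤ ∑ i ∈ range m, {j | skewEncEx α u (t + (i + 1 : ℕ)) j ≠ 0}.ncard := by
    simpa using card_nsmul_le_sum (range m) _ 1 fun i hi =>
      one_le_ncard_skewEncEx hα (hmid (i + 1) (by rw [mem_range] at hi; omega))
  rw [sum_range_succ, sum_range_succ', hfirst, hlast]
  omega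

theorem sum_ncard_skewEncEx_alternatingBurst (hα : α ^ 2 = α + 1) (m : ℕ) :
    ∑ s ∈ range (m + 2), {j : Fin 2 | skewEncEx α (alternatingBurst F m) s j ≠ 0}.ncard =
      m + 4 := by
  have hfirst : {j | skewEncEx α (alternatingBurst F m) (0 : ℕ) j ≠ 0}.ncard = 2 :=
    ncard_skewEncEx_of_start hα (alternatingBurst_ne_zero le_rfl (by omega))
      (alternatingBurst_eq_zero (by omega))
  have hlast : {j | skewEncEx α (alternatingBurst F m) (m + 1 : ℕ) j ≠ 0}.ncard = 2 :=
    ncard_skewEncEx_of_end hα (alternatingBurst_eq_zero (by omega))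
      (alternatingBurst_ne_zero (by omega) (by omega))
  have hmiddle : ∀ i ∈ range m,
      {j | skewEncEx α (alternatingBurst F m) (i + 1 : ℕ) j ≠ 0}.ncard = 1 := by
    intro i hi
    rw [mem_range] at hi
    exact ncard_skewEncEx_of_prev_eq_neg hα (alternatingBurst_ne_zero (by omega) (by omega))
      (alternatingBurst_sub_one (by omega) (by omega))
  rw [sum_range_succ, sum_range_succ', hfirst, hlast, sum_congr rfl hmiddle, sum_const,
    card_range, smul_eq_mul, mul_one]

theorem isLeast_skewLoopWeights (hα : α ^ 2 = α + 1) {ℓ : ℕ} (hℓ : 2 ≤ ℓ) :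
    IsLeast (skewLoopWeights α ℓ) (ℓ + 2) := by
  refine ⟨?_, ?_⟩
  · obtain ⟨m, rfl⟩ : ∃ m, ℓ = m + 2 := ⟨ℓ - 2, by omega⟩
    refine ⟨0, alternatingBurst F m, le_rfl, fun s hs => alternatingBurst_eq_zero (.inl hs),
      alternatingBurst_eq_zero (by omega), fun s hs => alternatingBurst_ne_zero (by omega)
      (by omega), alternatingBurst_eq_zero (by omega), ?_⟩
    simp only [zero_add, sum_ncard_skewEncEx_alternatingBurst hα]
  · rintro w ⟨t, u, -, -, hstart, hmid, hend, rfl⟩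
    exact le_sum_ncard_skewEncEx_of_loop hα hℓ hstart hmid hend

end Loops

theorem tendsto_natCast_add_div_self (c : ℝ) :
    Tendsto (fun n : ℕ => ((n : ℝ) + c) / n) atTop (𝓝 1) := by
  simpa using (tendsto_natCast_div_add_atTop c).inv₀ one_ne_zero

theorem skew_example_active_burst_distance_general
    (F : Type) [Field F]
    (α : F) (hα : α ^ 2 = α + 1) :
    ∃ d : ℕ → ℕ,
      (∀ ℓ : ℕ, 2 ≤ ℓ →
        IsLeast
          {w : ℕ | ∃ (t : ℤ) (u : ℤ → F), 0 ≤ t ∧ (∀ s : ℤ, s < 0 → u s = 0) ∧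
            u (t - 1) = 0 ∧ (∀ s : ℕ, s ≤ ℓ - 2 → u (t + s) ≠ 0) ∧
            u (t + (ℓ : ℤ) - 1) = 0 ∧
            w = ∑ s ∈ Finset.range ℓ,
                  {j : Fin 2 | skewEncEx α u (t + s) j ≠ 0}.ncard}
          (d ℓ) ∧
        d ℓ = ℓ + 2) ∧
      Filter.Tendsto (fun ℓ : ℕ => (d ℓ : ℝ) / (ℓ : ℝ)) Filter.atTop (nhds 1) := by
  refine ⟨fun ℓ => ℓ + 2, fun ℓ hℓ => ⟨isLeast_skewLoopWeights hα hℓ, rfl⟩, ?_⟩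
  simpa using tendsto_natCast_add_div_self 2

/-- For the example skew convolutional code, the `ℓ`-th order active
burst distance satisfies `d_ℓ^b = ℓ + 2` for every `ℓ ≥ 2`: the minimum of
`Σ_{s=0}^{ℓ−1} wt(v_{t+s})` over all starting times `t ∈ ℕ` and all information
sequences `u` describing a loop of length `ℓ` at time `t` (i.e. `u_{t−1} = 0`,
`u_{t+s} ≠ 0` for `0 ≤ s ≤ ℓ−2`, `u_{t+ℓ−1} = 0`) equals `ℓ + 2`.
Consequently the slope `σ = lim_{ℓ→∞} d_ℓ^b/ℓ` equals 1. -/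
theorem skew_example_active_burst_distance
    (F : Type) [Field F] [Fintype F] (hF : Fintype.card F = 4)
    (α : F) (hα : α ^ 2 = α + 1) :
    ∃ d : ℕ → ℕ,
      (∀ ℓ : ℕ, 2 ≤ ℓ →
        IsLeast
          {w : ℕ | ∃ (t : ℤ) (u : ℤ → F), 0 ≤ t ∧ (∀ s : ℤ, s < 0 → u s = 0) ∧
            u (t - 1) = 0 ∧ (∀ s : ℕ, s ≤ ℓ - 2 → u (t + s) ≠ 0) ∧
            u (t + (ℓ : ℤ) - 1) = 0 ∧
            w = ∑ s ∈ Finset.range ℓ,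
                  {j : Fin 2 | skewEncEx α u (t + s) j ≠ 0}.ncard}
          (d ℓ) ∧
        d ℓ = ℓ + 2) ∧
      Filter.Tendsto (fun ℓ : ℕ => (d ℓ : ℝ) / (ℓ : ℝ)) Filter.atTop (nhds 1) :=
  skew_example_active_burst_distance_general F α hα
end

section
/- The generator matrix G(D) = (1 + αD, α + α²D) of the example skew convolutional code C with Frobenius θ(a) = a² is non-catastrophic: for every information sequence u over F_4 with infinitely many nonzero blocks u_t, the code sequence v has infinitely many nonzero blocks v_t. -/
theorem eq_zero_of_smul_add_smul_eq_zero_of_det_ne_zero {F : Type*} [Field F]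
    {a b c d x y : F} (hdet : a * d - b * c ≠ 0) (h : x • ![a, b] + y • ![c, d] = 0) :
    x = 0 :=
  have hrows : LinearIndependent F ![![a, b], ![c, d]] :=
    Matrix.linearIndependent_rows_of_det_ne_zero (A := !![a, b; c, d])
      (by rwa [Matrix.det_fin_two_of])
  (LinearIndependent.pair_iff.1 hrows x y h).1

theorem eq_zero_of_skewEncEx_eq_zero {F : Type} [Field F] {α : F} (hα : α ^ 2 = α + 1)
    {u : ℤ → F} {t : ℤ} (hv : skewEncEx α u t = 0) : u t = 0 := by
  have hα0 : α ≠ 0 := by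
    rintro rfl
    norm_num at hα
  unfold skewEncEx at hv
  split_ifs at hv
  · refine eq_zero_of_smul_add_smul_eq_zero_of_det_ne_zero ?_ hv
    have hdet : 1 * α ^ 2 - α ^ 2 * α = -α := by linear_combination (-α) * hα
    rw [hdet]
    exact neg_ne_zero.2 hα0
  · refine eq_zero_of_smul_add_smul_eq_zero_of_det_ne_zero ?_ hv
    have hdet : 1 * α - α * α ^ 2 = -α ^ 2 := by linear_combination (-α) * hα
    rw [hdet]
    exact neg_ne_zero.2 (pow_ne_zero 2 hα0)

theorem skew_example_non_catastrophic_general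
    (F : Type) [Field F]
    (α : F) (hα : α ^ 2 = α + 1) :
    ∀ u : ℤ → F, (∀ t : ℤ, t < 0 → u t = 0) → {t : ℤ | u t ≠ 0}.Infinite →
      {t : ℤ | skewEncEx α u t ≠ 0}.Infinite :=
  fun u _ hu => hu.mono fun t (hut : u t ≠ 0) hvt => hut (eq_zero_of_skewEncEx_eq_zero hα hvt)

/-- The generator matrix `G(D) = (1 + αD, α + α²D)` of the example skew
convolutional code over `F_4` with Frobenius `θ(a) = a²` is non-catastrophic: every
causal information sequence with infinitely many nonzero blocks is encoded to a code
sequence with infinitely many nonzero blocks. -/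
theorem skew_example_non_catastrophic
    (F : Type) [Field F] [Fintype F] (hF : Fintype.card F = 4)
    (α : F) (hα : α ^ 2 = α + 1) :
    ∀ u : ℤ → F, (∀ t : ℤ, t < 0 → u t = 0) → {t : ℤ | u t ≠ 0}.Infinite →
      {t : ℤ | skewEncEx α u t ≠ 0}.Infinite :=
  skew_example_non_catastrophic_general F α hα
end

section
/- The example skew convolutional code C is not a fixed (time-invariant) memory-1 convolutional code: the skew encoder of C maps the information sequence u = 1, 0, 0, 1, 0, 0, … to the code sequence v = (1,α), (α,α²), (0,0), (1,α²), (α²,α), (0,0), …, but there exist no row vectors A_0, A_1 ∈ F_4^{1×2} such that the time-invariant encoder v_t = u_t A_0 + u_{t−1} A_1 maps this u to this v. -/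
/-- The information sequence `u = 1, 0, 0, 1, 0, 0, …` (i.e. `u_0 = u_3 = 1`,
all other blocks zero). -/
def uEx13 {F : Type} [Field F] : ℤ → F := fun t => if t = 0 ∨ t = 3 then 1 else 0

section SkewEncoder

variable {F : Type} [Field F]

lemma skewEncEx_of_odd (α : F) (u : ℤ → F) {t : ℤ} (ht : Odd t) :
    skewEncEx α u t = u t • ![1, α ^ 2] + u (t - 1) • ![α, α ^ 2] :=
  if_pos ht

lemma skewEncEx_of_even (α : F) (u : ℤ → F) {t : ℤ} (ht : Even t) :
    skewEncEx α u t = u t • ![1, α] + u (t - 1) • ![α ^ 2, α] :=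
  if_neg (Int.not_odd_iff_even.mpr ht)

lemma skewEncEx_eq_zero (α : F) {u : ℤ → F} {t : ℤ} (ht : u t = 0) (ht' : u (t - 1) = 0) :
    skewEncEx α u t = 0 := by
  unfold skewEncEx
  split_ifs <;> simp [ht, ht']

lemma uEx13_of_ne {t : ℤ} (h₀ : t ≠ 0) (h₃ : t ≠ 3) : uEx13 (F := F) t = 0 :=
  if_neg (by tauto)

@[simp] lemma uEx13_zero : uEx13 (F := F) 0 = 1 := if_pos (Or.inl rfl)

@[simp] lemma uEx13_three : uEx13 (F := F) 3 = 1 := if_pos (Or.inr rfl)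

@[simp] lemma uEx13_neg_one : uEx13 (F := F) (-1) = 0 := uEx13_of_ne (by decide) (by decide)

@[simp] lemma uEx13_one : uEx13 (F := F) 1 = 0 := uEx13_of_ne (by decide) (by decide)

@[simp] lemma uEx13_two : uEx13 (F := F) 2 = 0 := uEx13_of_ne (by decide) (by decide)

@[simp] lemma uEx13_four : uEx13 (F := F) 4 = 0 := uEx13_of_ne (by decide) (by decide)

end SkewEncoder

lemma ne_sq_of_sq_eq_add_one {R : Type*} [Ring R] [Nontrivial R] {α : R} (hα : α ^ 2 = α + 1) :
    α ≠ α ^ 2 := by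
  intro h
  rw [hα, left_eq_add] at h
  exact one_ne_zero h

theorem skew_example_not_time_invariant_general
    (F : Type) [Field F]
    (α : F) (hα : α ^ 2 = α + 1) :
    skewEncEx α (uEx13 (F := F)) 0 = ![1, α] ∧
    skewEncEx α (uEx13 (F := F)) 1 = ![α, α ^ 2] ∧
    skewEncEx α (uEx13 (F := F)) 2 = 0 ∧
    skewEncEx α (uEx13 (F := F)) 3 = ![1, α ^ 2] ∧
    skewEncEx α (uEx13 (F := F)) 4 = ![α ^ 2, α] ∧
    (∀ t : ℤ, 5 ≤ t → skewEncEx α (uEx13 (F := F)) t = 0) ∧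
    ¬ ∃ A₀ A₁ : Fin 2 → F, ∀ t : ℤ, 0 ≤ t →
        skewEncEx α (uEx13 (F := F)) t
          = uEx13 (F := F) t • A₀ + uEx13 (F := F) (t - 1) • A₁ := by
  have hv₀ : skewEncEx α uEx13 0 = ![1, α] := by simp [skewEncEx_of_even]
  have hv₃ : skewEncEx α uEx13 3 = ![1, α ^ 2] := by
    simp [skewEncEx_of_odd α _ (by decide : Odd (3 : ℤ))]
  refine ⟨hv₀, ?_, ?_, hv₃, ?_, ?_, ?_⟩
  · simp [skewEncEx_of_odd α _ odd_one]
  · simp [skewEncEx_eq_zero]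
  · simp [skewEncEx_of_even α _ (by decide : Even (4 : ℤ))]
  · intro t ht
    exact skewEncEx_eq_zero α (uEx13_of_ne (by omega) (by omega)) (uEx13_of_ne (by omega) (by omega))
  · -- A time-invariant encoder emits `A₀` at both times 0 and 3, where the skew encoder differs.
    rintro ⟨A₀, A₁, h⟩
    have hA₀ : ![1, α] = A₀ := by simpa [hv₀] using h 0 le_rfl
    have hA₀' : ![1, α ^ 2] = A₀ := by simpa [hv₃] using h 3 (by decide)
    exact ne_sq_of_sq_eq_add_one hα (by simpa using congrFun (hA₀.trans hA₀'.symm) 1)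

/-- The example skew convolutional code is not a fixed (time-invariant)
memory-1 convolutional code: the skew encoder maps `u = 1,0,0,1,0,0,…` to
`v = (1,α),(α,α²),(0,0),(1,α²),(α²,α),(0,0),…`, but no time-invariant encoder
`v_t = u_t A_0 + u_{t−1} A_1` maps this `u` to this `v`. -/
theorem skew_example_not_time_invariant
    (F : Type) [Field F] [Fintype F] (hF : Fintype.card F = 4)
    (α : F) (hα : α ^ 2 = α + 1) :
    skewEncEx α (uEx13 (F := F)) 0 = ![1, α] ∧
    skewEncEx α (uEx13 (F := F)) 1 = ![α, α ^ 2] ∧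
    skewEncEx α (uEx13 (F := F)) 2 = 0 ∧
    skewEncEx α (uEx13 (F := F)) 3 = ![1, α ^ 2] ∧
    skewEncEx α (uEx13 (F := F)) 4 = ![α ^ 2, α] ∧
    (∀ t : ℤ, 5 ≤ t → skewEncEx α (uEx13 (F := F)) t = 0) ∧
    ¬ ∃ A₀ A₁ : Fin 2 → F, ∀ t : ℤ, 0 ≤ t →
        skewEncEx α (uEx13 (F := F)) t
          = uEx13 (F := F) t • A₀ + uEx13 (F := F) (t - 1) • A₁ :=
  skew_example_not_time_invariant_general F α hα
end
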